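/- arXiv:1808.05559 — 4 statements merged into one kernel-verified Lean document; each statement's English description precedes it below -/
import Mathlib

section
/- Let f : A → B be a homomorphism of commutative rings and S ⊆ A a multiplicative subset. Assume that for every s ∈ S, f induces isomorphisms ker(s· : A → A) → ker(f(s)· : B → B) and coker(s· : A → A) → coker(f(s)· : B → B) of the kernels and cokernels of multiplication by s on A and by f(s) on B. Then the commutative square with corners A, B, S⁻¹A, S⁻¹B (with horizontal maps induced by f and vertical maps the localization maps) is a pullback square of rings; equivalently, the sequence 0 → A → S⁻¹A ⊕ B → S⁻¹B, with first map a ↦ (a/1, f(a)) and second map (x, b) ↦ x − b/1, is exact. -/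
/-!
If `x = a'/u ∈ S⁻¹A` and `b ∈ B` have the same image in `S⁻¹B`, then after enlarging `u` we may
assume `f a' = f u * b`. Injectivity on cokernels of `u` gives `a' = u * c`; then `f u` kills
`f c - b`, which by surjectivity on kernels is `f k` with `u * k = 0`, and `a = c - k` is the
required preimage. Injectivity of `A → S⁻¹A × B` is injectivity on the kernels.
-/

theorem Ideal.comap_le_of_quotientMap_injective {R S : Type*} [CommRing R] [CommRing S]
    {I : Ideal R} {J : Ideal S} {f : R →+* S} {H : I ≤ J.comap f}
    (hinj : Function.Injective (Ideal.quotientMap J f H)) : J.comap f ≤ I := by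
  intro a ha
  have : Ideal.quotientMap J f H (Ideal.Quotient.mk I a) = Ideal.quotientMap J f H 0 := by
    rw [Ideal.quotientMap_mk, map_zero, Ideal.Quotient.eq_zero_iff_mem]
    exact ha
  exact Ideal.Quotient.eq_zero_iff_mem.1 (hinj this)

section

variable {A B : Type*} [CommRing A] [CommRing B] (f : A →+* B)

theorem RingHom.dvd_of_map_dvd_of_quotientMap_injective {u a : A}
    {H : Ideal.span {u} ≤ (Ideal.span {f u}).comap f}
    (hinj : Function.Injective (Ideal.quotientMap (Ideal.span {f u}) f H))
    (h : f u ∣ f a) : u ∣ a := by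
  rw [← Ideal.mem_span_singleton] at h ⊢
  exact Ideal.comap_le_of_quotientMap_injective hinj h

theorem RingHom.exists_mul_eq_of_map_eq_mul {u a' : A} {b : B}
    (hker : Set.SurjOn f {a : A | u * a = 0} {b : B | f u * b = 0})
    (hdvd : f u ∣ f a' → u ∣ a') (h : f a' = f u * b) :
    ∃ a : A, u * a = a' ∧ f a = b := by
  obtain ⟨c, rfl⟩ := hdvd ⟨b, h⟩
  obtain ⟨k, hk, hfk⟩ := hker (show f u * (f c - b) = 0 by rw [mul_sub, ← map_mul, h, sub_self])
  refine ⟨c - k, ?_, ?_⟩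
  · rw [mul_sub, show u * k = 0 from hk, sub_zero]
  · rw [map_sub, hfk, sub_sub_cancel]

variable {S : Submonoid A} {Aₛ Bₛ : Type*} [CommRing Aₛ] [CommRing Bₛ]
  [Algebra A Aₛ] [IsLocalization S Aₛ] [Algebra B Bₛ] [IsLocalization (S.map f) Bₛ]

theorem injective_algebraMap_prod_of_injOn
    (hker : ∀ s ∈ S, Set.InjOn f {a : A | s * a = 0}) :
    Function.Injective (fun a : A => (algebraMap A Aₛ a, f a)) := by
  intro a₁ a₂ h
  obtain ⟨h₁, h₂⟩ := Prod.mk.inj h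
  obtain ⟨⟨s, hs⟩, hsa⟩ := (IsLocalization.map_eq_zero_iff S Aₛ (a₁ - a₂)).1
    (by rw [map_sub, h₁, sub_self])
  have : a₁ - a₂ = 0 := hker s hs hsa (mul_zero s) (by rw [map_sub, h₂, sub_self, map_zero])
  exact sub_eq_zero.1 this

theorem IsLocalization.exists_eq_mk'_map_eq_mul_of_map_eq_algebraMap {x : Aₛ} {b : B}
    (h : IsLocalization.map Bₛ f S.le_comap_map x = algebraMap B Bₛ b) :
    ∃ (a' : A) (u : S), x = IsLocalization.mk' Aₛ a' u ∧ f a' = f u * b := by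
  obtain ⟨⟨a₀, s⟩, rfl⟩ := IsLocalization.mk'_surjective S x
  rw [IsLocalization.map_mk', IsLocalization.mk'_eq_iff_eq_mul, ← map_mul] at h
  obtain ⟨⟨_, t, ht, rfl⟩, hc⟩ := (IsLocalization.eq_iff_exists (S.map f) Bₛ).1 h
  refine ⟨a₀ * t, s * ⟨t, ht⟩, (IsLocalization.mk'_cancel a₀ s ⟨t, ht⟩).symm, ?_⟩
  simp only [Submonoid.coe_mul, map_mul] at hc ⊢
  linear_combination hc

end

/-- If `f : A → B` is an analytic isomorphism along a multiplicative set `S`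
(i.e. `f` induces isomorphisms on kernels and cokernels of multiplication by
each `s ∈ S`), then the square `A, S⁻¹A, B, S⁻¹B` is a pullback of rings:
the sequence `0 → A → S⁻¹A ⊕ B → S⁻¹B` is exact, where the first map is
`a ↦ (a/1, f a)` and the second is `(x, b) ↦ x − b/1`. -/
theorem analytic_isomorphism_pullback
    {A B : Type*} [CommRing A] [CommRing B] (f : A →+* B) (S : Submonoid A)
    (hker : ∀ s ∈ S, Set.BijOn f {a : A | s * a = 0} {b : B | f s * b = 0})
    (hcoker : ∀ s : A, ∀ hs : s ∈ S,
      Function.Bijective (Ideal.quotientMap (Ideal.span {f s}) f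
        (Ideal.span_le.2 (Set.singleton_subset_iff.2
          (Ideal.mem_comap.2 (Ideal.subset_span (Set.mem_singleton _))))))) :
    Function.Injective
      (fun a : A => (algebraMap A (Localization S) a, f a)) ∧
    ∀ (x : Localization S) (b : B),
      IsLocalization.map (Localization (Submonoid.map f S)) f
          (Submonoid.le_comap_map S) x
        = algebraMap B (Localization (Submonoid.map f S)) b ↔
      ∃ a : A, algebraMap A (Localization S) a = x ∧ f a = b := by
  refine ⟨injective_algebraMap_prod_of_injOn f fun s hs => (hker s hs).injOn, fun x b => ⟨?_, ?_⟩⟩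
  · intro h
    obtain ⟨a', u, rfl, hfa'⟩ :=
      IsLocalization.exists_eq_mk'_map_eq_mul_of_map_eq_algebraMap f h
    obtain ⟨a, rfl, rfl⟩ := f.exists_mul_eq_of_map_eq_mul (hker u u.2).surjOn
      (f.dvd_of_map_dvd_of_quotientMap_injective (hcoker u u.2).1) hfa'
    exact ⟨a, (IsLocalization.mk'_mul_cancel_left a u).symm, rfl⟩
  · rintro ⟨a, rfl, rfl⟩
    exact IsLocalization.map_eq _ _
end

section
/- Let A be a commutative noetherian ring, I ⊆ A an ideal, M a finitely generated A-module, and i ≥ 1. Then the pro-system {Tor_i^A(A/I^λ, M)}_{λ∈ℕ} is pro-zero: for every λ there exists μ ≥ λ such that the transition map Tor_i^A(A/I^μ, M) → Tor_i^A(A/I^λ, M) is the zero map. -/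
/-!
Compute `Tor` with a resolution `P_•` of `M` by finite free modules. A class in
`Tor_{j+1}(A/I^m, M)` is represented by `1 ⊗ z` with `z ∈ P_{j+1}` and `d z ∈ I^m P_j`.
By Artin–Rees for `d(P_{j+1}) ⊆ P_j`, once `m` is large `I^m P_j ∩ d(P_{j+1}) ⊆ d(I^l P_{j+1})`,
so `z ∈ ker d + I^l P_{j+1} = im d + I^l P_{j+1}` and `1 ⊗ z` is a boundary of
`A/I^l ⊗ P_•`.
-/

universe u v

open CategoryTheory Limits MonoidalCategory

theorem Ideal.exists_comap_pow_smul_top_le_ker_sup {A P Q : Type*} [CommRing A]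
    [IsNoetherianRing A] [AddCommGroup P] [Module A P] [AddCommGroup Q] [Module A Q]
    [Module.Finite A Q] (I : Ideal A) (d : P →ₗ[A] Q) (l : ℕ) :
    ∃ m, l ≤ m ∧ (I ^ m • ⊤ : Submodule A Q).comap d ≤ LinearMap.ker d ⊔ I ^ l • ⊤ := by
  obtain ⟨k, hk⟩ := I.exists_pow_inf_eq_pow_smul (LinearMap.range d)
  refine ⟨l + k, by omega, fun x hx => ?_⟩
  have hdx : d x ∈ I ^ l • LinearMap.range d := by
    have : d x ∈ I ^ (l + k) • ⊤ ⊓ LinearMap.range d := ⟨hx, LinearMap.mem_range_self d x⟩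
    rw [hk (l + k) (by omega), Nat.add_sub_cancel] at this
    exact Submodule.smul_mono le_rfl inf_le_right this
  rw [← Submodule.map_top, ← Submodule.map_smul'', ← Submodule.mem_comap,
    Submodule.comap_map_eq, sup_comm] at hdx
  exact hdx

namespace TensorProduct

variable {R M : Type*} [CommRing R] [AddCommGroup M] [Module R M] (I : Ideal R)

theorem mk_quotient_one_surjective : Function.Surjective (mk R (R ⧸ I) M 1) := by
  rw [← quotTensorEquivQuotSMul_symm_comp_mkQ (M := M), LinearMap.coe_comp]
  exact (quotTensorEquivQuotSMul M I).symm.surjective.comp (Submodule.mkQ_surjective _)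

theorem ker_mk_quotient_one : LinearMap.ker (mk R (R ⧸ I) M 1) = I • ⊤ := by
  rw [← quotTensorEquivQuotSMul_symm_comp_mkQ (M := M), LinearEquiv.ker_comp, Submodule.ker_mkQ]

end TensorProduct

theorem HomologicalComplex.homologyMap_eq_zero_of_cycles_to_boundaries {R : Type*} [Ring R]
    {ι : Type*} {c : ComplexShape ι} {K L : HomologicalComplex (ModuleCat R) c}
    (φ : K ⟶ L) (i j k : ι)
    (h : ∀ x : K.X j, K.d j k x = 0 → ∃ y : L.X i, L.d i j y = φ.f j x) :
    homologyMap φ j = 0 := by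
  rw [← cancel_epi (K.homologyπ j), homologyπ_naturality, comp_zero]
  ext x
  obtain ⟨y, hy⟩ := h (K.iCycles j x) (by simp [← ModuleCat.comp_apply])
  have hxy : cyclesMap φ j x = L.toCycles i j y := by
    apply (ModuleCat.mono_iff_injective (L.iCycles j)).1 inferInstance
    rw [← ModuleCat.comp_apply, ← ModuleCat.comp_apply, cyclesMap_i, toCycles_i,
      ModuleCat.comp_apply, hy]
  simp only [ModuleCat.hom_comp, LinearMap.comp_apply, hxy]
  exact ConcreteCategory.congr_hom (L.toCycles_comp_homologyπ i j) y

namespace ModuleCat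

variable {R : Type u} [Ring R] {M : Type v} [AddCommGroup M] [Module R M]
  (P : ℕ → Type v) [∀ k, AddCommGroup (P k)] [∀ k, Module R (P k)]
  [∀ k, Module.Projective R (P k)] (d : ∀ k, P (k + 1) →ₗ[R] P k) (ε : P 0 →ₗ[R] M)

noncomputable def projectiveResolutionOfExact (hε : Function.Surjective ε)
    (h₀ : Function.Exact (d 0) ε) (h : ∀ k, Function.Exact (d (k + 1)) (d k)) :
    ProjectiveResolution (ModuleCat.of R M) where
  complex := ChainComplex.of (fun k => of R (P k)) (fun k => ofHom (d k))
    fun k => hom_ext (h k).linearMap_comp_eq_zero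
  π := (ChainComplex.toSingle₀Equiv _ _).symm ⟨ofHom ε, hom_ext h₀.linearMap_comp_eq_zero⟩
  quasiIso := ⟨fun n => by
    cases n with
    | zero =>
      rw [ChainComplex.quasiIsoAt₀_iff, ShortComplex.quasiIso_iff_of_zeros' _ rfl rfl rfl]
      refine ⟨?_, (epi_iff_surjective _).2 hε⟩
      rw [ShortComplex.moduleCat_exact_iff_range_eq_ker]
      exact h₀.linearMap_ker_eq.symm
    | succ n =>
      rw [quasiIsoAt_iff_exactAt' (hL := ChainComplex.exactAt_succ_single_obj ..),
        HomologicalComplex.exactAt_iff' _ (n + 1 + 1) (n + 1) n (by simp) (by simp),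
        ShortComplex.moduleCat_exact_iff_range_eq_ker]
      simp only [HomologicalComplex.shortComplexFunctor'_obj_f,
        HomologicalComplex.shortComplexFunctor'_obj_g, ChainComplex.of_d]
      exact (h n).linearMap_ker_eq.symm⟩

end ModuleCat

namespace Module.Finite

variable (A : Type u) [CommRing A]

noncomputable def coverRank (N : Type v) [AddCommGroup N] [Module A N] [Module.Finite A N] : ℕ :=
  (exists_fin' A N).choose

noncomputable def cover (N : Type v) [AddCommGroup N] [Module A N] [Module.Finite A N] :
    (Fin (coverRank A N) → A) →ₗ[A] N :=
  (exists_fin' A N).choose_spec.choose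

theorem cover_surjective (N : Type v) [AddCommGroup N] [Module A N] [Module.Finite A N] :
    Function.Surjective (cover A N) :=
  (exists_fin' A N).choose_spec.choose_spec

theorem range_subtype_comp_cover {N : Type v} [AddCommGroup N] [Module A N]
    (K : Submodule A N) [Module.Finite A K] : LinearMap.range (K.subtype ∘ₗ cover A K) = K := by
  rw [LinearMap.range_comp, LinearMap.range_eq_top.2 (cover_surjective A K), Submodule.map_top,
    Submodule.range_subtype]

variable [IsNoetherianRing A] (M : Type u) [AddCommGroup M] [Module A M] [Module.Finite A M]

/-- The kernel of the differential leaving the `k`-th term `Fin n → A` of the resolution,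
recorded together with `n`. -/
noncomputable def syzygy : ℕ → Σ n : ℕ, Submodule A (Fin n → A)
  | 0 => ⟨coverRank A M, LinearMap.ker (cover A M)⟩
  | k + 1 => ⟨coverRank A (syzygy k).2,
      LinearMap.ker ((syzygy k).2.subtype ∘ₗ cover A (syzygy k).2)⟩

noncomputable def finiteFreeResolution : ProjectiveResolution (ModuleCat.of A M) :=
  ModuleCat.projectiveResolutionOfExact (fun k => Fin (syzygy A M k).1 → A)
    (fun k => (syzygy A M k).2.subtype ∘ₗ cover A (syzygy A M k).2) (cover A M)
    (cover_surjective A M)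
    (LinearMap.exact_iff.2 (range_subtype_comp_cover A (syzygy A M 0).2).symm)
    (fun k => LinearMap.exact_iff.2 (range_subtype_comp_cover A (syzygy A M (k + 1)).2).symm)

instance (n : ℕ) : Module.Finite A ((finiteFreeResolution A M).complex.X n) :=
  inferInstanceAs (Module.Finite A (Fin (syzygy A M n).1 → A))

end Module.Finite

section QuotientTensor

variable {A : Type u} [CommRing A]

abbrev Ideal.quotientProj {J J' : Ideal A} (h : J ≤ J') :
    ModuleCat.of A (A ⧸ J) ⟶ ModuleCat.of A (A ⧸ J') :=
  ModuleCat.ofHom (Submodule.mapQ J J' LinearMap.id fun _ hx => h hx)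

theorem ChainComplex.homologyMap_tensor_quotientProj_eq_zero
    (K : ChainComplex (ModuleCat.{u} A) ℕ) (j : ℕ) (hK : K.ExactAt (j + 1))
    {J J' : Ideal A} (h : J ≤ J')
    (hd : (J • ⊤ : Submodule A (K.X j)).comap (K.d (j + 1) j).hom ≤
      LinearMap.ker (K.d (j + 1) j).hom ⊔ J' • ⊤) :
    HomologicalComplex.homologyMap ((NatTrans.mapHomologicalComplex
      ((tensoringLeft _).map (Ideal.quotientProj h)) _).app K) (j + 1) = 0 := by
  have hexact :
      LinearMap.range (K.d (j + 2) (j + 1)).hom = LinearMap.ker (K.d (j + 1) j).hom := by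
    rw [HomologicalComplex.exactAt_iff' K (j + 2) (j + 1) j (by simp) (by simp),
      ShortComplex.moduleCat_exact_iff_range_eq_ker] at hK
    exact hK
  apply HomologicalComplex.homologyMap_eq_zero_of_cycles_to_boundaries _ (j + 2) (j + 1) j
  intro x hx
  obtain ⟨z, rfl⟩ := TensorProduct.mk_quotient_one_surjective J x
  have hdz : K.d (j + 1) j z ∈ (J • ⊤ : Submodule A (K.X j)) := by
    rw [← TensorProduct.ker_mk_quotient_one]
    exact hx
  obtain ⟨b, hb, y, hy, rfl⟩ := Submodule.mem_sup.1 (hd hdz)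
  rw [← hexact] at hb
  obtain ⟨w, rfl⟩ := hb
  refine ⟨1 ⊗ₜ w, ?_⟩
  have hy' : (1 : A ⧸ J') ⊗ₜ[A] y = 0 := (TensorProduct.ker_mk_quotient_one J').ge hy
  change (1 : A ⧸ J') ⊗ₜ[A] K.d (j + 2) (j + 1) w =
    (1 : A ⧸ J') ⊗ₜ[A] (K.d (j + 2) (j + 1) w + y)
  rw [TensorProduct.tmul_add, hy', add_zero]

theorem ChainComplex.exists_homologyMap_tensor_quotientProj_pow_eq_zero [IsNoetherianRing A]
    (I : Ideal A) (K : ChainComplex (ModuleCat.{u} A) ℕ) (j : ℕ) [Module.Finite A (K.X j)]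
    (hK : K.ExactAt (j + 1)) (l : ℕ) :
    ∃ m, ∃ hm : l ≤ m, HomologicalComplex.homologyMap ((NatTrans.mapHomologicalComplex
      ((tensoringLeft _).map (Ideal.quotientProj (Ideal.pow_le_pow_right (I := I) hm))) _).app K)
        (j + 1) = 0 := by
  obtain ⟨m, hm, hd⟩ := I.exists_comap_pow_smul_top_le_ker_sup (K.d (j + 1) j).hom l
  exact ⟨m, hm, homologyMap_tensor_quotientProj_eq_zero K j hK _ hd⟩

end QuotientTensor

/-- For a commutative noetherian ring `A`, an ideal `I`, a finitely generated
`A`-module `M` and `i ≥ 1`, the pro-system `{Tor_i^A(A/I^λ, M)}_λ` is pro-zero: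
for every `λ` there is `μ ≥ λ` such that the transition map
`Tor_i^A(A/I^μ, M) → Tor_i^A(A/I^λ, M)` is zero. -/
theorem tor_pro_zero {A : Type} [CommRing A] [IsNoetherianRing A] (I : Ideal A)
    (M : Type) [AddCommGroup M] [Module A M] [Module.Finite A M]
    (i : ℕ) (hi : 1 ≤ i) (l : ℕ) :
    ∃ m : ℕ, ∃ hm : l ≤ m,
      ((Tor (ModuleCat.{0} A) i).map
          (ModuleCat.ofHom
            (Submodule.mapQ (I ^ m) (I ^ l) LinearMap.id
              (fun x hx => Ideal.pow_le_pow_right hm hx)))).app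
        (ModuleCat.of A M) = 0 := by
  obtain ⟨j, rfl⟩ : ∃ j, i = j + 1 := ⟨i - 1, by omega⟩
  let R := Module.Finite.finiteFreeResolution A M
  obtain ⟨m, hm, h⟩ :=
    R.complex.exists_homologyMap_tensor_quotientProj_pow_eq_zero I j (R.complex_exactAt_succ j) l
  refine ⟨m, hm, ?_⟩
  rw [Tor_map, ProjectiveResolution.leftDerived_app_eq _ R, HomologicalComplex.homologyFunctor_map, h]
  exact (congrArg _ zero_comp).trans comp_zero
end

section
/- Let k be a commutative ring and α ∈ k. In the commutative polynomial quotient ring R = k[x,y]/(xy − α), the elements 1, x^i (i ≥ 1), y^j (j ≥ 1) form a basis of R as a k-module. -/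
/-!
Modulo `xy = α` one has `x^a y^b = α^(min a b) • x^(a-b)` or `α^(min a b) • y^(b-a)`, so the
proposed elements span. For independence, the `k`-linear map `k[x,y] → ℤ →₀ k` sending `x^a y^b`
to `α^(min a b) • e_(a-b)` kills the multiples of `xy - α`, hence factors through the quotient,
where it sends the proposed elements to the standard basis of `ℤ →₀ k`.
-/

open MvPolynomial

def signedPow {R : Type*} [Monoid R] (x y : R) (n : ℤ) : R :=
  if 0 ≤ n then x ^ n.toNat else y ^ (-n).toNat

theorem map_signedPow {R S F : Type*} [Monoid R] [Monoid S] [FunLike F R S]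
    [MonoidHomClass F R S] (f : F) (x y : R) (n : ℤ) :
    f (signedPow x y n) = signedPow (f x) (f y) n := by
  unfold signedPow
  split_ifs <;> exact map_pow f _ _

theorem pow_mul_pow_eq_smul_signedPow {k R : Type*} [CommSemiring k] [CommSemiring R]
    [Algebra k R] {α : k} {x y : R} (h : x * y = algebraMap k R α) (a b : ℕ) :
    x ^ a * y ^ b = α ^ min a b • signedPow x y (a - b) := by
  rw [Algebra.smul_def, map_pow, ← h, mul_pow]
  unfold signedPow
  rcases le_or_gt b a with hba | hab
  · obtain ⟨c, rfl⟩ := Nat.exists_eq_add_of_le hba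
    rw [if_pos (by omega), min_eq_right hba, show ((b + c : ℕ) - b : ℤ).toNat = c by omega]
    ring
  · obtain ⟨c, rfl⟩ := Nat.exists_eq_add_of_lt hab
    rw [if_neg (by omega), min_eq_left hab.le,
      show (-((a : ℤ) - (a + c + 1 : ℕ))).toNat = c + 1 by omega]
    ring

section

variable {k : Type*} [CommRing k] (α : k)

local notation "I" => Ideal.span {(X 0 * X 1 - C α : MvPolynomial (Fin 2) k)}

noncomputable def normalFormCoeffs : MvPolynomial (Fin 2) k →ₗ[k] ℤ →₀ k :=
  (basisMonomials (Fin 2) k).constr k fun d =>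
    Finsupp.single ((d 0 : ℤ) - d 1) (α ^ min (d 0) (d 1))

theorem normalFormCoeffs_monomial (d : Fin 2 →₀ ℕ) (c : k) :
    normalFormCoeffs α (monomial d c) =
      Finsupp.single ((d 0 : ℤ) - d 1) (c * α ^ min (d 0) (d 1)) := by
  have hmon : (monomial d c : MvPolynomial (Fin 2) k) = c • basisMonomials (Fin 2) k d := by
    rw [coe_basisMonomials, smul_monomial, smul_eq_mul, mul_one]
  rw [hmon, map_smul, normalFormCoeffs, Module.Basis.constr_basis, Finsupp.smul_single,
    smul_eq_mul]

theorem normalFormCoeffs_mul_relation (p : MvPolynomial (Fin 2) k) :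
    normalFormCoeffs α (p * (X 0 * X 1 - C α)) = 0 := by
  induction p using MvPolynomial.induction_on' with
  | monomial d c =>
    set e : Fin 2 →₀ ℕ := Finsupp.single 0 1 + Finsupp.single 1 1
    have hxy : (X 0 * X 1 : MvPolynomial (Fin 2) k) = monomial e 1 := by
      rw [X, X, monomial_mul, one_mul]
    rw [mul_sub, hxy, monomial_mul, mul_one, ← monomial_zero', monomial_mul, add_zero, map_sub,
      normalFormCoeffs_monomial, normalFormCoeffs_monomial, sub_eq_zero]
    have h0 : (d + e) 0 = d 0 + 1 := by simp [e]
    have h1 : (d + e) 1 = d 1 + 1 := by simp [e]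
    rw [h0, h1, Nat.add_min_add_right]
    congr 1
    · push_cast; ring
    · ring
  | add p q hp hq => rw [add_mul, map_add, hp, hq, add_zero]

theorem normalFormCoeffs_X_pow_mul_X_pow (a b : ℕ) :
    normalFormCoeffs α (X 0 ^ a * X 1 ^ b) = Finsupp.single ((a : ℤ) - b) (α ^ min a b) := by
  rw [X_pow_eq_monomial, X_pow_eq_monomial, monomial_mul, one_mul, normalFormCoeffs_monomial]
  simp

theorem normalFormCoeffs_signedPow (n : ℤ) :
    normalFormCoeffs α (signedPow (X 0) (X 1) n) = Finsupp.single n 1 := by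
  unfold signedPow
  split_ifs with hn
  · simpa [hn] using normalFormCoeffs_X_pow_mul_X_pow α n.toNat 0
  · simpa [show -max (-n) 0 = n by omega] using normalFormCoeffs_X_pow_mul_X_pow α 0 (-n).toNat

noncomputable def quotientNormalFormCoeffs : (MvPolynomial (Fin 2) k ⧸ I) →ₗ[k] ℤ →₀ k :=
  (Submodule.restrictScalars k I).liftQ (normalFormCoeffs α)
      (fun p hp => by
        obtain ⟨q, rfl⟩ := Ideal.mem_span_singleton'.mp hp
        exact normalFormCoeffs_mul_relation α q) ∘ₗ
    (Submodule.Quotient.restrictScalarsEquiv k I).symm.toLinearMap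

theorem quotientNormalFormCoeffs_mk (p : MvPolynomial (Fin 2) k) :
    quotientNormalFormCoeffs α (Ideal.Quotient.mk I p) = normalFormCoeffs α p := rfl

theorem mk_X_mul_mk_X :
    Ideal.Quotient.mk I (X 0) * Ideal.Quotient.mk I (X 1) =
      algebraMap k (MvPolynomial (Fin 2) k ⧸ I) α := by
  rw [← map_mul, ← sub_eq_zero, ← Ideal.Quotient.mk_algebraMap, algebraMap_eq, ← map_sub,
    Ideal.Quotient.eq_zero_iff_mem]
  exact Ideal.subset_span rfl

theorem linearIndependent_signedPow_mk_X :
    LinearIndependent k (signedPow (Ideal.Quotient.mk I (X 0)) (Ideal.Quotient.mk I (X 1))) := by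
  refine LinearIndependent.of_comp (quotientNormalFormCoeffs α) ?_
  convert Finsupp.linearIndependent_single_one k ℤ with n
  rw [Function.comp_apply, ← map_signedPow, quotientNormalFormCoeffs_mk,
    normalFormCoeffs_signedPow]

theorem span_signedPow_mk_X :
    ⊤ ≤ Submodule.span k
      (Set.range (signedPow (Ideal.Quotient.mk I (X 0)) (Ideal.Quotient.mk I (X 1)))) := by
  rintro z -
  obtain ⟨p, rfl⟩ := Ideal.Quotient.mk_surjective z
  induction p using MvPolynomial.induction_on' with
  | monomial d c =>
    have hd : monomial d c = c • (X 0 ^ d 0 * X 1 ^ d 1 : MvPolynomial (Fin 2) k) := by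
      rw [monomial_eq, Finsupp.prod_fintype _ _ (fun _ => pow_zero _), Fin.prod_univ_two,
        smul_eq_C_mul]
    rw [hd, Algebra.smul_def, map_mul, Ideal.Quotient.mk_algebraMap, ← Algebra.smul_def,
      map_mul, map_pow, map_pow, pow_mul_pow_eq_smul_signedPow (mk_X_mul_mk_X α), smul_smul]
    exact Submodule.smul_mem _ _ (Submodule.subset_span ⟨_, rfl⟩)
  | add p q hp hq =>
    rw [map_add]
    exact Submodule.add_mem _ hp hq

end

/-- In `R = k[x,y]/(xy − α)`, the elements `1`, `x^i (i ≥ 1)`, `y^j (j ≥ 1)`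
form a `k`-module basis (indexed here by `ℤ`, with `n ≥ 0 ↦ x^n` and
`n < 0 ↦ y^{−n}`). -/
theorem commutative_quotient_basis {k : Type} [CommRing k] (α : k) :
    ∃ B : Module.Basis ℤ k
      ((MvPolynomial (Fin 2) k) ⧸
        (Ideal.span {(X 0 * X 1 - C α : MvPolynomial (Fin 2) k)})),
      ∀ n : ℤ,
        B n = if 0 ≤ n
          then (Ideal.Quotient.mk _ (X 0 : MvPolynomial (Fin 2) k)) ^ n.toNat
          else (Ideal.Quotient.mk _ (X 1 : MvPolynomial (Fin 2) k)) ^ (-n).toNat :=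
  ⟨.mk (linearIndependent_signedPow_mk_X α) (span_signedPow_mk_X α), fun n => by
    rw [Module.Basis.mk_apply, signedPow]⟩
end

section
/- Let k be a commutative ring and α ∈ k, and let R = k[x,y]/(xy − α). Then the square of ring homomorphisms with corners k, k[x], k[y], R (the maps being the canonical inclusions and projections) is a pullback square of rings: the canonical map k → k[x] ×_R k[y] is an isomorphism, where the fibre product consists of pairs (f, g) ∈ k[x] × k[y] having equal image in R. -/
/-!
Send `x ↦ T` and `y ↦ α T⁻¹` into the Laurent polynomials `k[T, T⁻¹]`, a ring homomorphism out
of `R` because `T · α T⁻¹ = α`. A pair `(f, g)` with equal images in `R` then satisfies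
`f(T) = g(α T⁻¹)`; the left side has no negative powers of `T` and the right side no positive
ones, so `f` is the constant `g(0)`. Exchanging the roles of `x` and `y` makes `g` constant too.
-/

open MvPolynomial

namespace LaurentPolynomial

lemma T_one_mul_C_mul_T_neg_one {R : Type*} [CommSemiring R] (a : R) :
    (T 1 : R[T;T⁻¹]) * (C a * T (-1)) = C a := by
  rw [mul_comm, mul_T_assoc]
  simp

end LaurentPolynomial

namespace Polynomial

open LaurentPolynomial

variable {R : Type*} [CommSemiring R]

lemma coeff_toLaurent_natCast (p : R[X]) (n : ℕ) : (toLaurent p).coeff n = p.coeff n :=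
  Finsupp.mapDomain_apply Nat.cast_injective _ n

lemma coeff_toLaurent_neg_succ (p : R[X]) (n : ℕ) : (toLaurent p).coeff (-(n + 1 : ℕ)) = 0 :=
  Finsupp.mapDomain_of_notMem_range _ _ (by rintro ⟨m, hm⟩; simp at hm; omega)

lemma eq_C_of_toLaurent_eq_invert {p q : R[X]} (h : toLaurent p = invert (toLaurent q)) :
    p = C (q.coeff 0) := by
  ext n
  have hn := congrArg (fun L : R[T;T⁻¹] ↦ L.coeff n) h
  simp only [coeff_toLaurent_natCast, invert_apply] at hn
  rcases n with _ | n
  · rw [hn]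
    simpa using coeff_toLaurent_natCast q 0
  · rw [hn, coeff_toLaurent_neg_succ, coeff_C_succ]

lemma aeval_T_one (p : R[X]) : aeval (T 1 : R[T;T⁻¹]) p = toLaurent p := by
  rw [← toLaurent_X, ← toLaurentAlg_apply, aeval_algHom_apply, aeval_X_left_apply,
    toLaurentAlg_apply]

lemma aeval_C_mul_T_neg_one (a : R) (p : R[X]) :
    aeval (LaurentPolynomial.C a * T (-1) : R[T;T⁻¹]) p =
      invert (toLaurent (p.comp (C a * X))) := by
  have hT : (LaurentPolynomial.C a * T (-1) : R[T;T⁻¹]) = invert (toLaurentAlg (C a * X)) := by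
    simp [toLaurent_X]
  rw [hT, aeval_algHom_apply invert, aeval_algHom_apply toLaurentAlg, comp_eq_aeval,
    toLaurentAlg_apply]

lemma coeff_zero_comp_C_mul_X (a : R) (p : R[X]) : (p.comp (C a * X)).coeff 0 = p.coeff 0 := by
  simp [coeff_zero_eq_eval_zero, eval_comp]

lemma eq_C_of_aeval_T_eq_aeval_C_mul_T_neg {a : R} {f g : R[X]}
    (h : aeval (T 1 : R[T;T⁻¹]) f = aeval (LaurentPolynomial.C a * T (-1)) g) :
    f = C (g.coeff 0) := by
  rw [aeval_T_one, aeval_C_mul_T_neg_one] at h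
  rw [eq_C_of_toLaurent_eq_invert h, coeff_zero_comp_C_mul_X]

end Polynomial

lemma aeval_eq_aeval_of_mul_eq {k A : Type*} [CommRing k] [CommRing A] [Algebra k A] {α : k}
    {f g : Polynomial k}
    (h : Polynomial.aeval
          (Ideal.Quotient.mk (Ideal.span {(X 0 * X 1 - C α : MvPolynomial (Fin 2) k)}) (X 0)) f
        = Polynomial.aeval
          (Ideal.Quotient.mk (Ideal.span {(X 0 * X 1 - C α : MvPolynomial (Fin 2) k)}) (X 1)) g)
    {u v : A} (huv : u * v = algebraMap k A α) :
    Polynomial.aeval u f = Polynomial.aeval v g := by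
  let φ := Ideal.Quotient.liftₐ (Ideal.span {(X 0 * X 1 - C α : MvPolynomial (Fin 2) k)})
    (aeval ![u, v]) fun p hp ↦ by
      obtain ⟨q, rfl⟩ := Ideal.mem_span_singleton'.mp hp
      simp [huv]
  have hφ : ∀ i, φ (Ideal.Quotient.mk _ (X i)) = ![u, v] i := fun i ↦
    (Ideal.Quotient.lift_mk _ _ _).trans (aeval_X _ i)
  simpa [← Polynomial.aeval_algHom_apply, hφ] using congrArg φ h

/-- The square with corners `k`, `k[x]`, `k[y]`, `R = k[x,y]/(xy − α)` (with
the canonical inclusions and projections) is a pullback of rings: a pair of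
polynomials `f ∈ k[x]`, `g ∈ k[y]` with equal images in `R` comes from a
unique constant `c ∈ k`. -/
theorem polynomial_pullback_square {k : Type} [CommRing k] (α : k) :
    ∀ f g : Polynomial k,
      Polynomial.aeval
          (Ideal.Quotient.mk (Ideal.span {(X 0 * X 1 - C α : MvPolynomial (Fin 2) k)})
            (X 0 : MvPolynomial (Fin 2) k)) f
        = Polynomial.aeval
            (Ideal.Quotient.mk (Ideal.span {(X 0 * X 1 - C α : MvPolynomial (Fin 2) k)})
              (X 1 : MvPolynomial (Fin 2) k)) g →
      ∃! c : k, Polynomial.C c = f ∧ Polynomial.C c = g := by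
  intro f g h
  have huv := LaurentPolynomial.T_one_mul_C_mul_T_neg_one α
  have hf : f = Polynomial.C (g.coeff 0) :=
    Polynomial.eq_C_of_aeval_T_eq_aeval_C_mul_T_neg (aeval_eq_aeval_of_mul_eq h huv)
  have hg : g = Polynomial.C (f.coeff 0) :=
    Polynomial.eq_C_of_aeval_T_eq_aeval_C_mul_T_neg
      (aeval_eq_aeval_of_mul_eq h ((mul_comm _ _).trans huv)).symm
  refine ⟨g.coeff 0, ⟨hf.symm, ?_⟩, fun c hc ↦ Polynomial.C_injective (hc.1.trans hf)⟩
  rw [hg, hf, Polynomial.coeff_C_zero]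
end
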